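/- Suppose the reduced scheme (Algorithm 3) holds with δγ − 1 ≥ 0, δβ_{k+1} ≤ δβ_k + α_kβ_k, β_k positive nondecreasing with β_k → ∞ and α_k > 0, and suppose (ε_k) is nonincreasing with ε_k ≥ 0 and Σ_{k=1}^{∞} α_kβ_kε_k < +∞. Let (x*,λ*) be a saddle point of L. Then the sequence (x_k, λ_k) is bounded and there exists C > 0 such that for all k ≥ 1: L(x_k, λ*) − L(x*, λ*) ≤ C/β_k, |f(x_k) − f(x*)| ≤ C/β_k, and ‖Ax_k − b‖ ≤ C/β_k. -/

import Mathlib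

open Filter Topology
open scoped RealInnerProductSpace

/-!
A discrete Lyapunov argument. With `q_k = Z^δ_k - x*`, the energy
`E_k = δ²β_k (L(x_k, λ*) - L(x*, λ*)) + ‖q_k‖²/2 + δ/2 ‖λ_k - λ*‖²
  + ((δγ - 1)/2 + δ²(μ_f + ε_k)β_k/2) ‖x_k - x*‖²`
satisfies `E_{k+1} ≤ E_k + δ‖x*‖ α_kβ_kε_k ‖q_{k+1}‖`: strong convexity of `L(·, λ*)`, whose
subgradient at `x_{k+1}` is `u_{k+1} + Aᵀλ*`, absorbs the cross terms, and
`δβ_{k+1} ≤ (δ + α_k)β_k` pays for the growth of the weights. As `‖q_{k+1}‖ ≤ √(2E_{k+1})`, the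
sequence `√E_k` grows by a summable amount, so `E_k` is bounded. This bounds the gap by `C/β_k` and
bounds `λ_k` and `q_k`; since `x_{k+1} - x*` is a convex combination of `q_{k+1}` and `x_k - x*`,
it bounds `x_k` too. Finally `δβ_k(Ax_k - b) - λ_k` is a convex combination of its previous value
and `-λ_{k+1}`, so it stays bounded, which gives `‖Ax_k - b‖ ≤ C/β_k`; the estimate of
`|f(x_k) - f(x*)|` combines the two others.
-/

section InnerProduct
variable {F : Type*} [NormedAddCommGroup F] [InnerProductSpace ℝ F]

theorem real_inner_sub_eq_half_sq (v w : F) :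
    ⟪v, v - w⟫ = ‖v‖ ^ 2 / 2 - ‖w‖ ^ 2 / 2 + ‖v - w‖ ^ 2 / 2 := by
  rw [norm_sub_sq_real, inner_sub_right, real_inner_self_eq_norm_sq]; ring

theorem half_sq_sub_half_sq_le_real_inner (v w : F) :
    ‖v‖ ^ 2 / 2 - ‖w‖ ^ 2 / 2 ≤ ⟪v, v - w⟫ := by
  rw [real_inner_sub_eq_half_sq]; linarith [sq_nonneg ‖v - w‖]

end InnerProduct

theorem le_max_of_le_max_succ {a : ℕ → ℝ} {M : ℝ} (h : ∀ k, 1 ≤ k → a (k + 1) ≤ max (a k) M) :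
    ∀ k, 1 ≤ k → a k ≤ max (a 1) M := by
  intro k hk
  induction k, hk using Nat.le_induction with
  | base => exact le_max_left _ _
  | succ k hk ih => exact (h k hk).trans (max_le ih (le_max_right _ _))

theorem exists_le_of_le_add_of_summable {a c : ℕ → ℝ} (hc : ∀ k, 1 ≤ k → 0 ≤ c k)
    (hsum : Summable c) (h : ∀ k, 1 ≤ k → a (k + 1) ≤ a k + c k) :
    ∃ M, ∀ k, 1 ≤ k → a k ≤ M := by
  have hpartial : ∀ n, a (n + 1) ≤ a 1 + ∑ i ∈ Finset.range n, c (i + 1) := by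
    intro n
    induction n with
    | zero => simp
    | succ n ih => rw [Finset.sum_range_succ]; linarith [h (n + 1) (by omega)]
  refine ⟨a 1 + ∑' i, c (i + 1), fun k hk => ?_⟩
  obtain ⟨n, rfl⟩ := Nat.exists_eq_add_of_le' hk
  have := ((summable_nat_add_iff 1).2 hsum).sum_le_tsum (Finset.range n)
    fun i _ => hc (i + 1) (by omega)
  linarith [hpartial n]

theorem sqrt_le_sqrt_add_of_le_add_mul_sqrt {e e' c : ℝ} (he : 0 ≤ e) (hc : 0 ≤ c)
    (h : e' ≤ e + c * √e') : √e' ≤ √e + c := by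
  rcases lt_or_ge e' 0 with he' | he'
  · rw [Real.sqrt_eq_zero_of_nonpos he'.le]; positivity
  · by_contra! hlt
    have := Real.sq_sqrt he
    have := Real.sq_sqrt he'
    nlinarith [Real.sqrt_nonneg e, Real.sqrt_nonneg e']

theorem exists_le_of_le_add_mul_sqrt {E c : ℕ → ℝ} (hE : ∀ k, 1 ≤ k → 0 ≤ E k)
    (hc : ∀ k, 1 ≤ k → 0 ≤ c k) (hsum : Summable c)
    (h : ∀ k, 1 ≤ k → E (k + 1) ≤ E k + c k * √(E (k + 1))) :
    ∃ S, ∀ k, 1 ≤ k → E k ≤ S := by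
  obtain ⟨M, hM⟩ := exists_le_of_le_add_of_summable (a := fun k => √(E k)) hc hsum fun k hk =>
    sqrt_le_sqrt_add_of_le_add_mul_sqrt (hE k hk) (hc k hk) (h k hk)
  refine ⟨M ^ 2, fun k hk => ?_⟩
  rw [← Real.sq_sqrt (hE k hk)]
  exact pow_le_pow_left₀ (Real.sqrt_nonneg _) (hM k hk) 2

section Recursion
variable {E : Type*} [SeminormedAddCommGroup E] [NormedSpace ℝ E]

theorem norm_sub_le_max_of_recursion {x q : ℕ → E} {c : E} {t : ℕ → ℝ} {Q : ℝ}
    (ht : ∀ k, 1 ≤ k → 0 ≤ t k)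
    (hq : ∀ k, 1 ≤ k → q (k + 1) = x (k + 1) - c + t k • (x (k + 1) - x k))
    (hQ : ∀ k, 1 ≤ k → ‖q (k + 1)‖ ≤ Q) :
    ∀ k, 1 ≤ k → ‖x k - c‖ ≤ max ‖x 1 - c‖ Q := by
  refine le_max_of_le_max_succ fun k hk => ?_
  have h1 : 0 < 1 + t k := by linarith [ht k hk]
  have hcombo : x (k + 1) - c = (1 / (1 + t k)) • q (k + 1) + (t k / (1 + t k)) • (x k - c) := by
    rw [hq k hk]; match_scalars <;> field_simp <;> ring
  calc ‖x (k + 1) - c‖ ≤ max ‖q (k + 1)‖ ‖x k - c‖ := by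
        rw [hcombo]
        exact convexOn_univ_norm.le_on_segment' trivial trivial (by positivity)
          (div_nonneg (ht k hk) h1.le) (by field_simp)
    _ ≤ max ‖x k - c‖ Q := max_le ((hQ k hk).trans (le_max_right _ _)) (le_max_left _ _)

theorem mul_norm_le_of_recursion {y l : ℕ → E} {w W : ℕ → ℝ} {Λ : ℝ}
    (hw : ∀ k, 1 ≤ k → 0 ≤ w k) (hW : ∀ k, 1 ≤ k → 0 < W k)
    (hwW : ∀ k, 1 ≤ k → w (k + 1) ≤ W k)
    (hrec : ∀ k, 1 ≤ k → W k • y (k + 1) - l (k + 1) = w k • y k - l k)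
    (hl : ∀ k, 1 ≤ k → ‖l k‖ ≤ Λ) :
    ∀ k, 1 ≤ k → w k * ‖y k‖ ≤ max ‖w 1 • y 1 - l 1‖ Λ + Λ := by
  have hv : ∀ k, 1 ≤ k → ‖w k • y k - l k‖ ≤ max ‖w 1 • y 1 - l 1‖ Λ := by
    refine le_max_of_le_max_succ (a := fun k => ‖w k • y k - l k‖) fun k hk => ?_
    set t := w (k + 1) / W k
    have hcombo : w (k + 1) • y (k + 1) - l (k + 1)
        = t • (w k • y k - l k) + (1 - t) • (-l (k + 1)) := by
      rw [← hrec k hk, smul_sub, smul_smul, div_mul_cancel₀ _ (hW k hk).ne']; module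
    calc ‖w (k + 1) • y (k + 1) - l (k + 1)‖ ≤ max ‖w k • y k - l k‖ ‖-l (k + 1)‖ := by
          rw [hcombo]
          exact convexOn_univ_norm.le_on_segment' trivial trivial
            (div_nonneg (hw _ (by omega)) (hW k hk).le)
            (sub_nonneg.2 ((div_le_one (hW k hk)).2 (hwW k hk))) (by ring)
      _ ≤ max ‖w k • y k - l k‖ Λ := by
          rw [norm_neg]; exact max_le_max le_rfl (hl _ (by omega))
  intro k hk
  calc w k * ‖y k‖ = ‖(w k • y k - l k) + l k‖ := by
        rw [sub_add_cancel, norm_smul, Real.norm_of_nonneg (hw k hk)]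
    _ ≤ max ‖w 1 • y 1 - l 1‖ Λ + Λ := (norm_add_le _ _).trans (add_le_add (hv k hk) (hl k hk))

end Recursion

section Energy
variable {X Z : Type*} [NormedAddCommGroup X] [NormedAddCommGroup Z]

/-- The Lyapunov energy, evaluated at `r = x - x*`, `q = Z^δ - x*`, `m = λ - λ*` and
`gap = L(x, λ*) - L(x*, λ*)`. -/
noncomputable def lyapunovEnergy (δ γ μ β ε gap : ℝ) (r q : X) (m : Z) : ℝ :=
  δ ^ 2 * β * gap + ‖q‖ ^ 2 / 2 + δ / 2 * ‖m‖ ^ 2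
    + ((δ * γ - 1) / 2 + δ ^ 2 * (μ + ε) * β / 2) * ‖r‖ ^ 2

theorem le_lyapunovEnergy {δ γ μ β ε gap : ℝ} {r q : X} {m : Z} (hδ : 0 < δ) (hδγ : 0 ≤ δ * γ - 1)
    (hμε : 0 ≤ μ + ε) (hβ : 0 ≤ β) (hgap : 0 ≤ gap) :
    0 ≤ lyapunovEnergy δ γ μ β ε gap r q m ∧ β * gap ≤ lyapunovEnergy δ γ μ β ε gap r q m / δ ^ 2 ∧
      ‖q‖ ≤ √(2 * lyapunovEnergy δ γ μ β ε gap r q m) ∧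
      ‖m‖ ≤ √(2 * lyapunovEnergy δ γ μ β ε gap r q m / δ) := by
  have h₁ : 0 ≤ δ ^ 2 * β * gap := by positivity
  have h₂ : 0 ≤ δ / 2 * ‖m‖ ^ 2 := by positivity
  have h₃ : 0 ≤ ((δ * γ - 1) / 2 + δ ^ 2 * (μ + ε) * β / 2) * ‖r‖ ^ 2 := by positivity
  have h₄ : 0 ≤ ‖q‖ ^ 2 / 2 := by positivity
  unfold lyapunovEnergy
  refine ⟨by linarith, ?_, Real.le_sqrt_of_sq_le (by linarith), Real.le_sqrt_of_sq_le ?_⟩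
  · rw [le_div_iff₀ (by positivity)]; linarith
  · rw [le_div_iff₀ hδ]; linarith

end Energy

section Lagrangian
variable {X Z : Type*} [NormedAddCommGroup X] [InnerProductSpace ℝ X]
  [NormedAddCommGroup Z] [InnerProductSpace ℝ Z]

noncomputable def lagrangian (f : X → ℝ) (A : X →L[ℝ] Z) (b : Z) (x : X) (l : Z) : ℝ :=
  f x + ⟪l, A x - b⟫

theorem map_eq_of_lagrangian_le {f : X → ℝ} {A : X →L[ℝ] Z} {b : Z} {xs : X} {ls : Z}
    (h : ∀ l, lagrangian f A b xs l ≤ lagrangian f A b xs ls) : A xs = b := by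
  have h := h (ls + (A xs - b))
  simp only [lagrangian, inner_add_left, real_inner_self_eq_norm_sq] at h
  have : ‖A xs - b‖ ^ 2 ≤ 0 := by linarith
  simpa [sub_eq_zero] using this

theorem exists_rates_of_bounds {f : X → ℝ} {A : X →L[ℝ] Z} {b : Z} {xs : X} {ls : Z}
    {x : ℕ → X} {β : ℕ → ℝ} {C₁ C₂ : ℝ} (hAxs : A xs = b) (hβ : ∀ k, 1 ≤ k → 0 < β k)
    (hgap : ∀ w, 0 ≤ lagrangian f A b w ls - lagrangian f A b xs ls)
    (hgap_le : ∀ k, 1 ≤ k → β k * (lagrangian f A b (x k) ls - lagrangian f A b xs ls) ≤ C₁)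
    (hfeas : ∀ k, 1 ≤ k → β k * ‖A (x k) - b‖ ≤ C₂) :
    ∃ C, 0 < C ∧ ∀ k, 1 ≤ k →
      lagrangian f A b (x k) ls - lagrangian f A b xs ls ≤ C / β k ∧
      |f (x k) - f xs| ≤ C / β k ∧ ‖A (x k) - b‖ ≤ C / β k := by
  refine ⟨|C₁| + (1 + ‖ls‖) * |C₂| + 1, by positivity, fun k hk => ?_⟩
  have hL : lagrangian f A b (x k) ls - lagrangian f A b xs ls
      = f (x k) - f xs + ⟪ls, A (x k) - b⟫ := by
    simp only [lagrangian, hAxs, sub_self, inner_zero_right]; ring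
  have hβk := hβ k hk
  have hgap_k := mul_nonneg hβk.le (hgap (x k))
  have hinner := abs_le.1 (abs_real_inner_le_norm ls (A (x k) - b))
  have hinner₁ := mul_le_mul_of_nonneg_left hinner.1 hβk.le
  have hinner₂ := mul_le_mul_of_nonneg_left hinner.2 hβk.le
  have hls := mul_le_mul_of_nonneg_left (hfeas k hk) (norm_nonneg ls)
  have hC₁ := le_abs_self C₁
  have hC₂ : (1 + ‖ls‖) * C₂ ≤ (1 + ‖ls‖) * |C₂| := by gcongr; exact le_abs_self C₂
  have hC₂' : 0 ≤ (1 + ‖ls‖) * |C₂| := by positivity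
  have hfeas_k : 0 ≤ β k * ‖A (x k) - b‖ := by positivity
  have h₁ := hgap_le k hk
  have h₂ := hfeas k hk
  rw [hL] at hgap_k h₁ ⊢
  refine ⟨?_, ?_, ?_⟩
  · rw [le_div_iff₀ hβk]; linarith
  · rw [le_div_iff₀ hβk, ← abs_of_pos hβk, ← abs_mul, abs_le]
    constructor <;> linarith
  · rw [le_div_iff₀ hβk]; linarith

variable [CompleteSpace X] [CompleteSpace Z]
open ContinuousLinearMap

theorem lagrangian_sub_add_le_inner {f : X → ℝ} {A : X →L[ℝ] Z} {b : Z} {μ : ℝ} {y w u : X}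
    (hsc : μ / 2 * ‖w - y‖ ^ 2 ≤ f w - f y - ⟪u, w - y⟫) (l : Z) :
    lagrangian f A b y l - lagrangian f A b w l + μ / 2 * ‖y - w‖ ^ 2
      ≤ ⟪u + adjoint A l, y - w⟫ := by
  have hu : ⟪u, w - y⟫ = -⟪u, y - w⟫ := by rw [← inner_neg_right, neg_sub]
  rw [norm_sub_rev] at hsc
  simp only [lagrangian, inner_add_left, adjoint_inner_left, inner_sub_right] at hsc ⊢
  linarith

theorem reduced_step_relations {A : X →L[ℝ] Z} {b : Z} {xs : X} (hAxs : A xs = b)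
    {μ δ γ a B e : ℝ} (ha : a ≠ 0) {x x' z z' zd' u q q' : X} {l l' : Z}
    (hq : q = δ • z + (1 - δ * γ) • x - xs) (hq' : q' = δ • z' + (1 - δ * γ) • x' - xs)
    (hz : z' = (1 / a) • (x' - x) + γ • x')
    (hzd : zd' = δ • z' + (1 - δ * γ) • x')
    (hl : l' = l + (a * B) • (A zd' - b))
    (hu : (1 / a) • (z' - z) = -(B • (u + adjoint A l' + e • x' - μ • (x' - zd')))) :
    q' = x' - xs + (δ / a) • (x' - x) ∧ l' - l = (a * B) • A q' ∧
      q' - q = -(δ * a * B) • (u + adjoint A l' + e • x')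
        + (1 - δ * γ - δ ^ 2 * B * μ) • (x' - x) ∧
      ((a + δ) * B) • (A x' - b) - l' = (δ * B) • (A x - b) - l := by
  have hq'x : q' = x' - xs + (δ / a) • (x' - x) := by
    rw [hq', hz]; match_scalars <;> field_simp
    ring
  have hl' : l' - l = (a * B) • A q' := by
    rw [hl, add_sub_cancel_left, hq', map_sub, hAxs, hzd]
  refine ⟨hq'x, hl', ?_, ?_⟩
  · have hd : x' - zd' = -(δ / a) • (x' - x) := by
      rw [hzd, hz]; match_scalars <;> field_simp
      ring
    have hzz : z' - z = a • ((1 / a) • (z' - z)) := by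
      rw [smul_smul, mul_one_div_cancel ha, one_smul]
    have : q' - q = δ • (z' - z) + (1 - δ * γ) • (x' - x) := by rw [hq, hq']; module
    rw [this, hzz, hu, hd]; match_scalars <;> field_simp <;> ring
  · have hAq : A q' = (A x' - b) + (δ / a) • ((A x' - b) - (A x - b)) := by
      rw [hq'x, map_add, map_sub, map_smul, map_sub, hAxs, sub_sub_sub_cancel_right]
    rw [eq_add_of_sub_eq' hl', hAq]; match_scalars <;> field_simp <;> ring

theorem real_inner_sub_eq_of_reduced_step {A : X →L[ℝ] Z} {xs : X} {ls : Z}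
    {μ δ γ a B e : ℝ} (ha : a ≠ 0) {x x' q q' u : X} {l l' : Z}
    (hq' : q' = x' - xs + (δ / a) • (x' - x))
    (hl : l' - l = (a * B) • A q')
    (hqq : q' - q = -(δ * a * B) • (u + adjoint A l' + e • x')
      + (1 - δ * γ - δ ^ 2 * B * μ) • (x' - x)) :
    ⟪q', q' - q⟫ = -(δ * B) * (a * ⟪u + adjoint A ls, x' - xs⟫ + δ * ⟪u + adjoint A ls, x' - x⟫)
      - δ * ⟪l' - ls, l' - l⟫
      - δ * B * e * (a * ‖x' - xs‖ ^ 2 + δ * ⟪x' - xs, x' - x⟫ + a * ⟪q', xs⟫)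
      + (1 - δ * γ - δ ^ 2 * B * μ) * ⟪q', x' - x⟫ := by
  have haq : a • q' = a • (x' - xs) + δ • (x' - x) := by
    rw [hq', smul_add, smul_smul, mul_div_cancel₀ _ ha]
  have hqg : ⟪a • q', u + adjoint A ls⟫
      = a * ⟪u + adjoint A ls, x' - xs⟫ + δ * ⟪u + adjoint A ls, x' - x⟫ := by
    rw [haq, inner_add_left, real_inner_smul_left, real_inner_smul_left,
      real_inner_comm (u + adjoint A ls), real_inner_comm (u + adjoint A ls)]
  have hqx : ⟪a • q', x'⟫ = a * ‖x' - xs‖ ^ 2 + δ * ⟪x' - xs, x' - x⟫ + a * ⟪q', xs⟫ := by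
    have : ⟪a • q', x'⟫ = ⟪a • q', x' - xs⟫ + ⟪a • q', xs⟫ := by
      rw [← inner_add_right, sub_add_cancel]
    rw [this, real_inner_smul_left q' xs, haq, inner_add_left, real_inner_smul_left,
      real_inner_smul_left, real_inner_self_eq_norm_sq, real_inner_comm (x' - xs) (x' - x)]
  rw [← hqg, ← hqx, hqq, hl]
  simp only [inner_add_right, inner_sub_right, inner_sub_left, real_inner_smul_left,
    real_inner_smul_right, inner_neg_right, adjoint_inner_right, map_smul, neg_smul,
    real_inner_comm (A q')]
  ring

theorem lyapunovEnergy_succ_le {f : X → ℝ} {A : X →L[ℝ] Z} {b : Z} {xs : X} {ls : Z}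
    {μ δ γ a B B' e e' : ℝ} (hδ : 0 < δ) (ha : 0 < a) (hB : 0 < B) (hμ : 0 ≤ μ)
    (he' : 0 ≤ e') (hee : e' ≤ e) (hδγ : 0 ≤ δ * γ - 1) (hB' : δ * B' ≤ δ * B + a * B)
    {x x' q q' u : X} {l l' : Z}
    (hsc : ∀ w, μ / 2 * ‖w - x'‖ ^ 2 ≤ f w - f x' - ⟪u, w - x'⟫)
    (hgap : 0 ≤ lagrangian f A b x' ls - lagrangian f A b xs ls)
    (hq' : q' = x' - xs + (δ / a) • (x' - x))
    (hl : l' - l = (a * B) • A q')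
    (hqq : q' - q = -(δ * a * B) • (u + adjoint A l' + e • x')
      + (1 - δ * γ - δ ^ 2 * B * μ) • (x' - x)) :
    lyapunovEnergy δ γ μ B' e' (lagrangian f A b x' ls - lagrangian f A b xs ls) (x' - xs) q'
        (l' - ls)
      ≤ lyapunovEnergy δ γ μ B e (lagrangian f A b x ls - lagrangian f A b xs ls) (x - xs) q
          (l - ls)
        + δ * ‖xs‖ * (a * B * e) * ‖q'‖ := by
  have hinner := real_inner_sub_eq_of_reduced_step (ls := ls) ha.ne' hq' hl hqq
  have hq_sq := half_sq_sub_half_sq_le_real_inner q' q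
  have hl_sq := half_sq_sub_half_sq_le_real_inner (l' - ls) (l - ls)
  rw [sub_sub_sub_cancel_right] at hl_sq
  have hg_xs := lagrangian_sub_add_le_inner (A := A) (b := b) (hsc xs) ls
  have hg_x := lagrangian_sub_add_le_inner (A := A) (b := b) (hsc x) ls
  have hxs : -⟪q', xs⟫ ≤ ‖xs‖ * ‖q'‖ := by
    rw [← inner_neg_left, mul_comm, ← norm_neg q']; exact real_inner_le_norm _ _
  have hT : ⟪x' - xs, x' - x⟫ = ‖x' - xs‖ ^ 2 / 2 - ‖x - xs‖ ^ 2 / 2 + ‖x' - x‖ ^ 2 / 2 := by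
    have h := real_inner_sub_eq_half_sq (x' - xs) (x - xs)
    rwa [sub_sub_sub_cancel_right] at h
  have hqd : ⟪x' - xs, x' - x⟫ ≤ ⟪q', x' - x⟫ := by
    rw [hq', inner_add_left, real_inner_smul_left, real_inner_self_eq_norm_sq]
    have : 0 ≤ δ / a * ‖x' - x‖ ^ 2 := by positivity
    linarith
  rw [hT] at hinner hqd
  have he : 0 ≤ e := he'.trans hee
  have hee' : 0 ≤ e - e' := by linarith
  have hρ : 0 ≤ δ * B + a * B - δ * B' := by linarith
  have hc : 1 - δ * γ - δ ^ 2 * B * μ ≤ 0 := by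
    have : 0 ≤ δ ^ 2 * B * μ := by positivity
    linarith
  have hcd := mul_le_mul_of_nonpos_left hqd hc
  have s_gap := mul_nonneg (mul_nonneg hδ.le hρ) hgap
  have s_r := mul_nonneg (mul_nonneg (mul_nonneg hδ.le hρ) (add_nonneg hμ he'))
    (sq_nonneg ‖x' - xs‖)
  have s_r' : 0 ≤ δ * (δ * B + a * B) * (e - e') * ‖x' - xs‖ ^ 2 := by positivity
  have s_r'' : 0 ≤ δ * a * B * e * ‖x' - xs‖ ^ 2 := by positivity
  have s_d := mul_nonneg hδγ (sq_nonneg ‖x' - x‖)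
  have s_d' : 0 ≤ δ ^ 2 * B * (2 * μ + e) * ‖x' - x‖ ^ 2 := by positivity
  unfold lyapunovEnergy
  linear_combination hq_sq + δ * hl_sq + hinner + (δ * B * a) * hg_xs + (δ ^ 2 * B) * hg_x
    + (δ * B * e * a) * hxs + hcd + s_gap + (s_r + s_r' + s_r'' + s_d + s_d') / 2

end Lagrangian

theorem convergence_rates_reduced_algorithm_general
    {X Z : Type*}
    [NormedAddCommGroup X] [InnerProductSpace ℝ X] [CompleteSpace X]
    [NormedAddCommGroup Z] [InnerProductSpace ℝ Z] [CompleteSpace Z]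
    (f : X → ℝ)
    (A : X →L[ℝ] Z) (b : Z)
    (μf : ℝ) (hμf : 0 ≤ μf)
    (hfS : ∀ x u v : X, (∀ w, f w - f x ≥ ⟪v, w - x⟫) →
        f u - f x - ⟪v, u - x⟫ ≥ μf / 2 * ‖u - x‖ ^ 2)
    (L : X → Z → ℝ)
    (hL : ∀ x l, L x l = f x + ⟪l, A x - b⟫)
    (δ γ : ℝ) (hδ : 0 < δ)
    (α β ε : ℕ → ℝ)
    (hα : ∀ k, 1 ≤ k → 0 < α k)
    (hβpos : ∀ k, 1 ≤ k → 0 < β k)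
    (hεnn : ∀ k, 1 ≤ k → 0 ≤ ε k)
    (x : ℕ → X) (lam : ℕ → Z) (Zs Zd : ℕ → X)
    (hZ : ∀ k, 1 ≤ k → Zs (k + 1) = (1 / α k) • (x (k + 1) - x k) + γ • x (k + 1))
    (hZd : ∀ k, 1 ≤ k → Zd (k + 1) = δ • Zs (k + 1) + (1 - δ * γ) • x (k + 1))
    (hlam : ∀ k, 1 ≤ k → lam (k + 1) = lam k + (α k * β k) • (A (Zd (k + 1)) - b))
    (hstep : ∀ k, 1 ≤ k → ∃ u,
        (∀ w, f w - f (x (k + 1)) ≥ ⟪u, w - x (k + 1)⟫) ∧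
        (1 / α k) • (Zs (k + 1) - Zs k) =
          -(β k • (u + (ContinuousLinearMap.adjoint A) (lam (k + 1)) + ε k • x (k + 1)
              - μf • (x (k + 1) - Zd (k + 1)))))
    (hδγ : δ * γ - 1 ≥ 0)
    (hββ : ∀ k, 1 ≤ k → δ * β (k + 1) ≤ δ * β k + α k * β k)
    (hεmono : ∀ k, 1 ≤ k → ε (k + 1) ≤ ε k)
    (hsum : Summable (fun k => α k * β k * ε k))
    (xs : X) (ls : Z)
    (hsaddle : ∀ x' l', L xs l' ≤ L xs ls ∧ L xs ls ≤ L x' ls)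
    :
    (∃ M : ℝ, ∀ k, 1 ≤ k → ‖x k‖ ≤ M ∧ ‖lam k‖ ≤ M) ∧
    ∃ C : ℝ, 0 < C ∧ ∀ k, 1 ≤ k →
      L (x k) ls - L xs ls ≤ C / β k ∧
      |f (x k) - f xs| ≤ C / β k ∧
      ‖A (x k) - b‖ ≤ C / β k := by
  obtain rfl : L = lagrangian f A b := funext₂ hL
  have hAxs : A xs = b := map_eq_of_lagrangian_le fun l => (hsaddle xs l).1
  have hgap : ∀ w, 0 ≤ lagrangian f A b w ls - lagrangian f A b xs ls :=
    fun w => sub_nonneg.2 (hsaddle w ls).2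
  choose u hu hZs using hstep
  -- `Zd 1` is not constrained by the scheme, so `Z^δ_k - x*` is built from `Zs`.
  set q : ℕ → X := fun k => δ • Zs k + (1 - δ * γ) • x k - xs
  have hrel := fun k hk => reduced_step_relations (q := q k) (q' := q (k + 1)) hAxs
    (hα k hk).ne' rfl rfl (hZ k hk) (hZd k hk) (hlam k hk) (hZs k hk)
  set E : ℕ → ℝ := fun k => lyapunovEnergy δ γ μf (β k) (ε k)
    (lagrangian f A b (x k) ls - lagrangian f A b xs ls) (x k - xs) (q k) (lam k - ls)
  have hE := fun k hk => le_lyapunovEnergy (r := x k - xs) (q := q k) (m := lam k - ls) hδ hδγ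
    (add_nonneg hμf (hεnn k hk)) (hβpos k hk).le (hgap (x k))
  have hc : ∀ k, 1 ≤ k → 0 ≤ δ * ‖xs‖ * (α k * β k * ε k) := fun k hk => by
    have := hα k hk; have := hβpos k hk; have := hεnn k hk; positivity
  obtain ⟨S, hS⟩ := exists_le_of_le_add_mul_sqrt (fun k hk => (hE k hk).1)
    (fun k hk => mul_nonneg (Real.sqrt_nonneg 2) (hc k hk))
    ((hsum.mul_left _).mul_left _) fun k hk => by
      obtain ⟨hq', hl, hqq, -⟩ := hrel k hk
      have hstep := lyapunovEnergy_succ_le hδ (hα k hk) (hβpos k hk) hμf (hεnn _ (by omega))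
        (hεmono k hk) hδγ (hββ k hk) (fun w => hfS _ w _ (hu k hk)) (hgap _) hq' hl hqq
      have hq := (hE (k + 1) (by omega)).2.2.1
      rw [Real.sqrt_mul zero_le_two] at hq
      linarith [mul_le_mul_of_nonneg_left hq (hc k hk)]
  have hlam_le : ∀ k, 1 ≤ k → ‖lam k‖ ≤ ‖ls‖ + √(2 * S / δ) := fun k hk => by
    have : √(2 * E k / δ) ≤ √(2 * S / δ) := Real.sqrt_le_sqrt <| by gcongr; exact hS k hk
    linarith [norm_le_norm_add_norm_sub' (lam k) ls, (hE k hk).2.2.2]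
  have hx := norm_sub_le_max_of_recursion (Q := √(2 * S)) (fun k hk => (div_pos hδ (hα k hk)).le)
    (fun k hk => (hrel k hk).1) fun k hk => (hE (k + 1) (by omega)).2.2.1.trans <|
      Real.sqrt_le_sqrt <| by gcongr; exact hS _ (by omega)
  have hfeas := mul_norm_le_of_recursion (y := fun k => A (x k) - b) (w := fun k => δ * β k)
    (W := fun k => (α k + δ) * β k)
    (fun k hk => (mul_pos hδ (hβpos k hk)).le)
    (fun k hk => mul_pos (add_pos (hα k hk) hδ) (hβpos k hk)) (fun k hk => by linarith [hββ k hk])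
    (fun k hk => (hrel k hk).2.2.2) hlam_le
  refine ⟨⟨max (‖xs‖ + max ‖x 1 - xs‖ √(2 * S)) (‖ls‖ + √(2 * S / δ)), fun k hk =>
    ⟨le_max_of_le_left <| by linarith [norm_le_norm_add_norm_sub' (x k) xs, hx k hk],
      le_max_of_le_right (hlam_le k hk)⟩⟩, ?_⟩
  exact exists_rates_of_bounds (C₁ := S / δ ^ 2) hAxs hβpos hgap
    (fun k hk => (hE k hk).2.1.trans <| by gcongr; exact hS k hk)
    (fun k hk => (le_div_iff₀' hδ).2 <| by rw [← mul_assoc]; exact hfeas k hk)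

theorem convergence_rates_reduced_algorithm
    {X Z : Type*}
    [NormedAddCommGroup X] [InnerProductSpace ℝ X] [CompleteSpace X]
    [NormedAddCommGroup Z] [InnerProductSpace ℝ Z] [CompleteSpace Z]
    (f : X → ℝ)
    (hfconv : ConvexOn ℝ Set.univ f) (hfcont : Continuous f)
    (A : X →L[ℝ] Z) (b : Z)
    (μf : ℝ) (hμf : 0 ≤ μf)
    (hfS : ∀ x u v : X, (∀ w, f w - f x ≥ ⟪v, w - x⟫) →
        f u - f x - ⟪v, u - x⟫ ≥ μf / 2 * ‖u - x‖ ^ 2)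
    (L : X → Z → ℝ)
    (hL : ∀ x l, L x l = f x + ⟪l, A x - b⟫)
    (δ γ : ℝ) (hδ : 0 < δ) (hγ : 0 < γ)
    (α β ε : ℕ → ℝ)
    (hα : ∀ k, 1 ≤ k → 0 < α k)
    (hβpos : ∀ k, 1 ≤ k → 0 < β k)
    (hβmono : ∀ k, 1 ≤ k → β k ≤ β (k + 1))
    (hεnn : ∀ k, 1 ≤ k → 0 ≤ ε k)
    (hβtop : Tendsto β atTop atTop)
    (x : ℕ → X) (lam : ℕ → Z) (Zs Zd : ℕ → X)
    (hZ : ∀ k, 1 ≤ k → Zs (k + 1) = (1 / α k) • (x (k + 1) - x k) + γ • x (k + 1))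
    (hZd : ∀ k, 1 ≤ k → Zd (k + 1) = δ • Zs (k + 1) + (1 - δ * γ) • x (k + 1))
    (hlam : ∀ k, 1 ≤ k → lam (k + 1) = lam k + (α k * β k) • (A (Zd (k + 1)) - b))
    (hstep : ∀ k, 1 ≤ k → ∃ u,
        (∀ w, f w - f (x (k + 1)) ≥ ⟪u, w - x (k + 1)⟫) ∧
        (1 / α k) • (Zs (k + 1) - Zs k) =
          -(β k • (u + (ContinuousLinearMap.adjoint A) (lam (k + 1)) + ε k • x (k + 1)
              - μf • (x (k + 1) - Zd (k + 1)))))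
    (hδγ : δ * γ - 1 ≥ 0)
    (hββ : ∀ k, 1 ≤ k → δ * β (k + 1) ≤ δ * β k + α k * β k)
    (hεmono : ∀ k, 1 ≤ k → ε (k + 1) ≤ ε k)
    (hsum : Summable (fun k => α k * β k * ε k))
    (xs : X) (ls : Z)
    (hsaddle : ∀ x' l', L xs l' ≤ L xs ls ∧ L xs ls ≤ L x' ls)
    :
    (∃ M : ℝ, ∀ k, 1 ≤ k → ‖x k‖ ≤ M ∧ ‖lam k‖ ≤ M) ∧
    ∃ C : ℝ, 0 < C ∧ ∀ k, 1 ≤ k →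
      L (x k) ls - L xs ls ≤ C / β k ∧
      |f (x k) - f xs| ≤ C / β k ∧
      ‖A (x k) - b‖ ≤ C / β k :=
  convergence_rates_reduced_algorithm_general f A b μf hμf hfS L hL δ γ hδ α β ε hα hβpos hεnn x lam
    Zs Zd hZ hZd hlam hstep hδγ hββ hεmono hsum xs ls hsaddle
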